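/- Let π be a Poisson tensor on ℝ^N, c a Casimir function for π, v a Poisson vector field for π, and λ ∈ ℝ. If c' is a Casimir function for π with ∑_i v^i ∂c'/∂x^i = 0 everywhere, then c'∘q and l_dc' are Casimir functions for the bivector field (x,y) ↦ π_TM(x,y) + λ c(x) (v_C ∧ v_V)(x,y) on ℝ^N × ℝ^N. -/

import Mathlib

open scoped BigOperators

/-- Partial derivative of `f : ℝ^N → ℝ` in the `s`-th coordinate direction. -/
noncomputable def pd {N : ℕ} (f : (Fin N → ℝ) → ℝ) (s : Fin N) (x : Fin N → ℝ) : ℝ :=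
  fderiv ℝ f x (Pi.single s 1)

/-- Coordinate direction on `ℝ^N × ℝ^N` indexed by `Fin N ⊕ Fin N`. -/
noncomputable def dir (N : ℕ) (a : Fin N ⊕ Fin N) : (Fin N → ℝ) × (Fin N → ℝ) :=
  Sum.elim (fun i => (Pi.single i 1, 0)) (fun i => (0, Pi.single i 1)) a

/-- Partial derivative on `ℝ^N × ℝ^N` in the `a`-th coordinate direction. -/
noncomputable def pdT {N : ℕ} (F : (Fin N → ℝ) × (Fin N → ℝ) → ℝ)
    (a : Fin N ⊕ Fin N) (z : (Fin N → ℝ) × (Fin N → ℝ)) : ℝ :=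
  fderiv ℝ F z (dir N a)

/-- `π` is a Poisson tensor on `ℝ^N`: a smooth antisymmetric bivector field
satisfying the Jacobi identity. -/
def IsPoisson {N : ℕ} (π : (Fin N → ℝ) → Matrix (Fin N) (Fin N) ℝ) : Prop :=
  (∀ i j, ContDiff ℝ (⊤ : ℕ∞) fun x => π x i j) ∧
  (∀ x i j, π x j i = - π x i j) ∧
  (∀ x i j k, ∑ s, (π x i s * pd (fun x => π x j k) s x
      + π x j s * pd (fun x => π x k i) s x
      + π x k s * pd (fun x => π x i j) s x) = 0)

/-- `v` is a (smooth) Poisson vector field for `π` (i.e. `L_v π = 0`). -/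
def IsPoissonVF {N : ℕ} (π : (Fin N → ℝ) → Matrix (Fin N) (Fin N) ℝ)
    (v : (Fin N → ℝ) → Fin N → ℝ) : Prop :=
  (∀ i, ContDiff ℝ (⊤ : ℕ∞) fun x => v x i) ∧
  (∀ x i j, ∑ s, (pd (fun x => π x i j) s x * v x s
      - π x s j * pd (fun x => v x i) s x
      - π x i s * pd (fun x => v x j) s x) = 0)

/-- The tangent lift `π_TM` of `π` to `ℝ^N × ℝ^N`. -/
noncomputable def tlift {N : ℕ} (π : (Fin N → ℝ) → Matrix (Fin N) (Fin N) ℝ)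
    (z : (Fin N → ℝ) × (Fin N → ℝ)) : Matrix (Fin N ⊕ Fin N) (Fin N ⊕ Fin N) ℝ :=
  Matrix.of fun a b =>
    match a, b with
    | Sum.inl _, Sum.inl _ => 0
    | Sum.inl i, Sum.inr j => π z.1 i j
    | Sum.inr i, Sum.inl j => π z.1 i j
    | Sum.inr i, Sum.inr j => ∑ s, pd (fun x => π x i j) s z.1 * z.2 s

/-- The complete lift `v_C` of a vector field `v`. -/
noncomputable def liftC {N : ℕ} (v : (Fin N → ℝ) → Fin N → ℝ)
    (z : (Fin N → ℝ) × (Fin N → ℝ)) : Fin N ⊕ Fin N → ℝ :=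
  Sum.elim (fun i => v z.1 i) (fun i => ∑ s, pd (fun x => v x i) s z.1 * z.2 s)

/-- The vertical lift `v_V` of a vector field `v`. -/
def liftV {N : ℕ} (v : (Fin N → ℝ) → Fin N → ℝ)
    (z : (Fin N → ℝ) × (Fin N → ℝ)) : Fin N ⊕ Fin N → ℝ :=
  Sum.elim (fun _ => 0) (fun i => v z.1 i)

/-- The wedge `u ∧ w` of two vector fields, as a bivector field. -/
def wedge {Z ι : Type*} (u w : Z → ι → ℝ) (z : Z) : Matrix ι ι ℝ :=
  Matrix.of fun a b => u z a * w z b - u z b * w z a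

/-- A Poisson tensor on `ℝ^N × ℝ^N`: a smooth antisymmetric bivector field
satisfying the Jacobi identity. -/
def IsPoissonT {N : ℕ}
    (P : (Fin N → ℝ) × (Fin N → ℝ) → Matrix (Fin N ⊕ Fin N) (Fin N ⊕ Fin N) ℝ) : Prop :=
  (∀ a b, ContDiff ℝ (⊤ : ℕ∞) fun z => P z a b) ∧
  (∀ z a b, P z b a = - P z a b) ∧
  (∀ z a b c, ∑ s, (P z a s * pdT (fun z => P z b c) s z
      + P z b s * pdT (fun z => P z c a) s z
      + P z c s * pdT (fun z => P z a b) s z) = 0)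

/-- `c` is a Casimir function for `π` on `ℝ^N`. -/
def IsCasimir {N : ℕ} (π : (Fin N → ℝ) → Matrix (Fin N) (Fin N) ℝ)
    (c : (Fin N → ℝ) → ℝ) : Prop :=
  ContDiff ℝ (⊤ : ℕ∞) c ∧ ∀ x j, ∑ i, pd c i x * π x i j = 0

/-- `F` is a Casimir function for the bivector field `P` on `ℝ^N × ℝ^N`. -/
def IsCasimirT {N : ℕ}
    (P : (Fin N → ℝ) × (Fin N → ℝ) → Matrix (Fin N ⊕ Fin N) (Fin N ⊕ Fin N) ℝ)
    (F : (Fin N → ℝ) × (Fin N → ℝ) → ℝ) : Prop :=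
  ∀ z b, ∑ a, pdT F a z * P z a b = 0

/-- `f ∘ q : ℝ^N × ℝ^N → ℝ`. -/
def fq {N : ℕ} (f : (Fin N → ℝ) → ℝ) (z : (Fin N → ℝ) × (Fin N → ℝ)) : ℝ := f z.1

/-- The fiber-wise linear function `l_{df}` on `ℝ^N × ℝ^N`. -/
noncomputable def ldf {N : ℕ} (f : (Fin N → ℝ) → ℝ) (z : (Fin N → ℝ) × (Fin N → ℝ)) : ℝ :=
  ∑ s, pd f s z.1 * z.2 s

/-- The commutator `[v,w]` of two vector fields on `ℝ^N`. -/
noncomputable def vbr {N : ℕ} (v w : (Fin N → ℝ) → Fin N → ℝ)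
    (x : Fin N → ℝ) (i : Fin N) : ℝ :=
  ∑ s, (v x s * pd (fun x => w x i) s x - w x s * pd (fun x => v x i) s x)

section helpers
variable {N : ℕ}

lemma pd_smooth {f : (Fin N → ℝ) → ℝ} (hf : ContDiff ℝ (⊤ : ℕ∞) f) (s : Fin N) :
    ContDiff ℝ (⊤ : ℕ∞) (pd f s) :=
  (hf.fderiv_right (m := (⊤ : ℕ∞)) (by simp)).clm_apply contDiff_const

lemma pd_zero_of {f : (Fin N → ℝ) → ℝ} (h : ∀ x, f x = 0) (s : Fin N) (x : Fin N → ℝ) :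
    pd f s x = 0 := by
  have : f = fun _ => (0:ℝ) := funext h
  simp [pd, this]

lemma pd_sum_mul {f g : Fin N → (Fin N → ℝ) → ℝ} {x : Fin N → ℝ} {s : Fin N}
    (hf : ∀ i, DifferentiableAt ℝ (f i) x) (hg : ∀ i, DifferentiableAt ℝ (g i) x) :
    pd (fun x => ∑ i, f i x * g i x) s x
      = ∑ i, (pd (f i) s x * g i x + f i x * pd (g i) s x) := by
  unfold pd
  rw [fderiv_fun_sum (A := fun i y => f i y * g i y) (fun i _ => (hf i).fun_mul (hg i))]
  rw [ContinuousLinearMap.sum_apply]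
  refine Finset.sum_congr rfl fun i _ => ?_
  rw [fderiv_fun_mul (hf i) (hg i)]
  simp [mul_comm]
  ring

lemma pd_sum_mul_zero {f g : Fin N → (Fin N → ℝ) → ℝ}
    (hf : ∀ i, ContDiff ℝ (⊤ : ℕ∞) (f i)) (hg : ∀ i, ContDiff ℝ (⊤ : ℕ∞) (g i))
    (h : ∀ x, ∑ i, f i x * g i x = 0) (s : Fin N) (x : Fin N → ℝ) :
    ∑ i, (pd (f i) s x * g i x + f i x * pd (g i) s x) = 0 := by
  rw [← pd_sum_mul (fun i => ((hf i).differentiable (by simp)).differentiableAt)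
      (fun i => ((hg i).differentiable (by simp)).differentiableAt)]
  exact pd_zero_of h s x

lemma pd_comm {f : (Fin N → ℝ) → ℝ} (hf : ContDiff ℝ (⊤ : ℕ∞) f) (i s : Fin N) (x : Fin N → ℝ) :
    pd (pd f s) i x = pd (pd f i) s x := by
  have hd : Differentiable ℝ f := hf.differentiable (by simp)
  have hd2 : DifferentiableAt ℝ (fderiv ℝ f) x :=
    ((hf.fderiv_right (m := (⊤ : ℕ∞)) (by simp)).differentiable (by simp)).differentiableAt
  have h1 : ∀ w, pd (pd f w) i x = fderiv ℝ (fderiv ℝ f) x (Pi.single i 1) (Pi.single w 1) := by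
    intro w
    unfold pd
    rw [fderiv_clm_apply hd2 (differentiableAt_const _)]
    simp
  have h1' : ∀ w, pd (pd f w) s x = fderiv ℝ (fderiv ℝ f) x (Pi.single s 1) (Pi.single w 1) := by
    intro w
    unfold pd
    rw [fderiv_clm_apply hd2 (differentiableAt_const _)]
    simp
  rw [h1 s, h1' i]
  exact second_derivative_symmetric (fun y => (hd y).hasFDerivAt) hd2.hasFDerivAt _ _

lemma pdT_fq {f : (Fin N → ℝ) → ℝ} (hf : ContDiff ℝ (⊤ : ℕ∞) f) (a : Fin N ⊕ Fin N)
    (z : (Fin N → ℝ) × (Fin N → ℝ)) :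
    pdT (fq f) a z = Sum.elim (fun i => pd f i z.1) (fun _ => 0) a := by
  have h : HasFDerivAt (fq f) ((fderiv ℝ f z.1).comp (ContinuousLinearMap.fst ℝ _ _)) z :=
    ((hf.differentiable (by simp) z.1).hasFDerivAt).comp z hasFDerivAt_fst
  unfold pdT
  rw [h.fderiv]
  cases a with
  | inl i => simp [dir, pd]
  | inr i => simp [dir]

lemma pdT_ldf {f : (Fin N → ℝ) → ℝ} (hf : ContDiff ℝ (⊤ : ℕ∞) f) (a : Fin N ⊕ Fin N)
    (z : (Fin N → ℝ) × (Fin N → ℝ)) :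
    pdT (ldf f) a z = Sum.elim (fun i => ∑ s, pd (pd f i) s z.1 * z.2 s)
      (fun i => pd f i z.1) a := by
  have hps : ∀ s : Fin N, HasFDerivAt (fun z : (Fin N → ℝ) × (Fin N → ℝ) => pd f s z.1)
      ((fderiv ℝ (pd f s) z.1).comp (ContinuousLinearMap.fst ℝ _ _)) z :=
    fun s => (((pd_smooth hf s).differentiable (by simp) z.1).hasFDerivAt).comp z hasFDerivAt_fst
  have hsnd : ∀ s : Fin N, HasFDerivAt (fun z : (Fin N → ℝ) × (Fin N → ℝ) => z.2 s)
      ((ContinuousLinearMap.proj s).comp (ContinuousLinearMap.snd ℝ _ _)) z :=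
    fun s => by
      have := ((ContinuousLinearMap.proj (R := ℝ) (φ := fun _ : Fin N => ℝ) s).comp
        (ContinuousLinearMap.snd ℝ (Fin N → ℝ) (Fin N → ℝ))).hasFDerivAt (x := z)
      exact this
  have h : HasFDerivAt (ldf f)
      (∑ s, (pd f s z.1 • ((ContinuousLinearMap.proj (R := ℝ) (φ := fun _ : Fin N => ℝ) s).comp (ContinuousLinearMap.snd ℝ _ _))
        + z.2 s • ((fderiv ℝ (pd f s) z.1).comp (ContinuousLinearMap.fst ℝ _ _)))) z := by
    apply HasFDerivAt.fun_sum
    intro s _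
    exact (hps s).mul (hsnd s)
  unfold pdT
  rw [h.fderiv, ContinuousLinearMap.sum_apply]
  cases a with
  | inl i =>
    simp only [dir, Sum.elim_inl]
    rw [show (∑ s, pd (pd f i) s z.1 * z.2 s) = ∑ s, pd (pd f s) i z.1 * z.2 s from
      Finset.sum_congr rfl fun s _ => by rw [pd_comm hf]]
    refine Finset.sum_congr rfl fun s _ => ?_
    simp [pd, mul_comm]
  | inr i =>
    simp only [dir, Sum.elim_inr]
    rw [Finset.sum_eq_single i]
    · simp [Pi.single_apply]
    · intro b _ hb
      simp [Pi.single_apply, hb]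
    · simp
end helpers


/-- if `c'` is a Casimir function for `π` with `v(c') = 0`, then
`c'∘q` and `l_dc'` are Casimir functions for `π_TM + λ c (v_C ∧ v_V)`. -/
theorem casimirs_of_deformation_liftC_liftV {N : ℕ}
    (π : (Fin N → ℝ) → Matrix (Fin N) (Fin N) ℝ) (c : (Fin N → ℝ) → ℝ)
    (v : (Fin N → ℝ) → Fin N → ℝ) (l : ℝ) (c' : (Fin N → ℝ) → ℝ)
    (hπ : IsPoisson π) (hc : IsCasimir π c) (hv : IsPoissonVF π v)
    (hc' : IsCasimir π c') (hvc' : ∀ x, ∑ i, v x i * pd c' i x = 0) :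
    IsCasimirT (fun z => tlift π z + (l * c z.1) • wedge (liftC v) (liftV v) z) (fq c') ∧
    IsCasimirT (fun z => tlift π z + (l * c z.1) • wedge (liftC v) (liftV v) z) (ldf c') := by
  obtain ⟨hπ1, hπ2, hπ3⟩ := hπ
  obtain ⟨hv1, hv2⟩ := hv
  obtain ⟨hc'1, hc'2⟩ := hc'
  have D1 : ∀ (j s : Fin N) (x : Fin N → ℝ),
      ∑ i, (pd (pd c' i) s x * π x i j + pd c' i x * pd (fun x => π x i j) s x) = 0 :=
    fun j s x => pd_sum_mul_zero (fun i => pd_smooth hc'1 i) (fun i => hπ1 i j)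
      (fun x => hc'2 x j) s x
  have D2 : ∀ (s : Fin N) (x : Fin N → ℝ),
      ∑ i, (pd (fun x => v x i) s x * pd c' i x + v x i * pd (pd c' i) s x) = 0 :=
    fun s x => pd_sum_mul_zero hv1 (fun i => pd_smooth hc'1 i) hvc' s x
  constructor
  · intro z b
    cases b with
    | inl j =>
      simp only [Fintype.sum_sum_type, pdT_fq hc'1, Sum.elim_inl, Sum.elim_inr,
        Matrix.add_apply, Matrix.smul_apply, smul_eq_mul, tlift, wedge, liftC, liftV,
        Matrix.of_apply, zero_mul, mul_zero, Finset.sum_const_zero, add_zero, zero_add,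
        sub_zero, zero_sub, mul_neg, sub_self]
      simp
    | inr j =>
      simp only [Fintype.sum_sum_type, pdT_fq hc'1, Sum.elim_inl, Sum.elim_inr,
        Matrix.add_apply, Matrix.smul_apply, smul_eq_mul, tlift, wedge, liftC, liftV,
        Matrix.of_apply, zero_mul, mul_zero, Finset.sum_const_zero, add_zero, zero_add,
        sub_zero, zero_sub, mul_neg, sub_self]
      have e : ∀ i : Fin N, pd c' i z.1 * (π z.1 i j + l * c z.1 * (v z.1 i * v z.1 j))
          = pd c' i z.1 * π z.1 i j + (l * c z.1 * v z.1 j) * (v z.1 i * pd c' i z.1) :=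
        fun i => by ring
      rw [Finset.sum_congr rfl fun i _ => e i, Finset.sum_add_distrib, ← Finset.mul_sum,
        hc'2 z.1 j, hvc' z.1, mul_zero, add_zero]
  · intro z b
    cases b with
    | inl j =>
      simp only [Fintype.sum_sum_type, pdT_ldf hc'1, Sum.elim_inl, Sum.elim_inr,
        Matrix.add_apply, Matrix.smul_apply, smul_eq_mul, tlift, wedge, liftC, liftV,
        Matrix.of_apply, zero_mul, mul_zero, Finset.sum_const_zero, add_zero, zero_add,
        sub_zero, zero_sub, mul_neg, sub_self]
      have e : ∀ i : Fin N, pd c' i z.1 * (π z.1 i j + -(l * c z.1 * (v z.1 j * v z.1 i)))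
          = pd c' i z.1 * π z.1 i j + (-(l * c z.1 * v z.1 j)) * (v z.1 i * pd c' i z.1) :=
        fun i => by ring
      rw [Finset.sum_congr rfl fun i _ => e i, Finset.sum_add_distrib, ← Finset.mul_sum,
        hc'2 z.1 j, hvc' z.1]
      simp
    | inr j =>
      simp only [Fintype.sum_sum_type, pdT_ldf hc'1, Sum.elim_inl, Sum.elim_inr,
        Matrix.add_apply, Matrix.smul_apply, smul_eq_mul, tlift, wedge, liftC, liftV,
        Matrix.of_apply, zero_mul, mul_zero, Finset.sum_const_zero, add_zero, zero_add,
        sub_zero, zero_sub, mul_neg, sub_self]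
      have key1 : ∑ i, ((∑ s, pd (pd c' i) s z.1 * z.2 s) * π z.1 i j
          + pd c' i z.1 * (∑ s, pd (fun x => π x i j) s z.1 * z.2 s)) = 0 := by
        have e : ∀ i : Fin N, (∑ s, pd (pd c' i) s z.1 * z.2 s) * π z.1 i j
            + pd c' i z.1 * (∑ s, pd (fun x => π x i j) s z.1 * z.2 s)
            = ∑ s, (pd (pd c' i) s z.1 * π z.1 i j
                + pd c' i z.1 * pd (fun x => π x i j) s z.1) * z.2 s := by
          intro i
          rw [Finset.sum_mul, Finset.mul_sum, ← Finset.sum_add_distrib]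
          exact Finset.sum_congr rfl fun s _ => by ring
        rw [Finset.sum_congr rfl fun i _ => e i, Finset.sum_comm]
        refine Finset.sum_eq_zero fun s _ => ?_
        rw [← Finset.sum_mul, D1 j s z.1, zero_mul]
      have key2 : ∑ i, ((∑ s, pd (pd c' i) s z.1 * z.2 s) * v z.1 i
          + pd c' i z.1 * (∑ s, pd (fun x => v x i) s z.1 * z.2 s)) = 0 := by
        have e : ∀ i : Fin N, (∑ s, pd (pd c' i) s z.1 * z.2 s) * v z.1 i
            + pd c' i z.1 * (∑ s, pd (fun x => v x i) s z.1 * z.2 s)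
            = ∑ s, (pd (fun x => v x i) s z.1 * pd c' i z.1
                + v z.1 i * pd (pd c' i) s z.1) * z.2 s := by
          intro i
          rw [Finset.sum_mul, Finset.mul_sum, ← Finset.sum_add_distrib]
          exact Finset.sum_congr rfl fun s _ => by ring
        rw [Finset.sum_congr rfl fun i _ => e i, Finset.sum_comm]
        refine Finset.sum_eq_zero fun s _ => ?_
        rw [← Finset.sum_mul, D2 s z.1, zero_mul]
      have e : ∀ i : Fin N,
          (∑ s, pd (pd c' i) s z.1 * z.2 s) * (π z.1 i j + l * c z.1 * (v z.1 i * v z.1 j))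
          + pd c' i z.1 * (∑ s, pd (fun x => π x i j) s z.1 * z.2 s
            + l * c z.1 * ((∑ s, pd (fun x => v x i) s z.1 * z.2 s) * v z.1 j
              - (∑ s, pd (fun x => v x j) s z.1 * z.2 s) * v z.1 i))
          = ((∑ s, pd (pd c' i) s z.1 * z.2 s) * π z.1 i j
              + pd c' i z.1 * (∑ s, pd (fun x => π x i j) s z.1 * z.2 s))
            + (l * c z.1 * v z.1 j) * ((∑ s, pd (pd c' i) s z.1 * z.2 s) * v z.1 i
              + pd c' i z.1 * (∑ s, pd (fun x => v x i) s z.1 * z.2 s))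
            + (-(l * c z.1 * (∑ s, pd (fun x => v x j) s z.1 * z.2 s)))
              * (v z.1 i * pd c' i z.1) := fun i => by ring
      rw [← Finset.sum_add_distrib, Finset.sum_congr rfl fun i _ => e i,
        Finset.sum_add_distrib, Finset.sum_add_distrib, ← Finset.mul_sum, ← Finset.mul_sum,
        key1, key2, hvc' z.1]
      ring
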